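/- For every real B > 0, every integer x ≥ 1, and every nonnegative integer p, ∫_x^∞ (sin((2p+1)πξ)/sin(πξ)) e^{-Bξ²} dξ = (1/2)√(π/B) ∑_{k=-p}^{p} e^{-π²k²/B} Re[erfc(√B x - iπk/√B)], where erfc(z) = (2/√π)∫_z^∞ e^{-t²} dt is the complementary error function (extended to complex arguments), and the left-hand kernel is extended continuously at integer points. -/

import Mathlib

open Real MeasureTheory

/-- The grating kernel `sin((2p+1)πx)/sin(πx)`, extended continuously
(to the value `2p+1`) at integer points. -/
noncomputable def graux (p : ℕ) (x : ℝ) : ℝ :=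
  if Real.sin (Real.pi * x) = 0 then (2 * p + 1 : ℝ)
  else Real.sin ((2 * p + 1) * Real.pi * x) / Real.sin (Real.pi * x)

/-- The complementary error function extended to complex arguments:
`erfc(z) = (2/√π) ∫_0^∞ e^{-(z+t)²} dt`. -/
noncomputable def cerfc (z : ℂ) : ℂ :=
  2 / Real.sqrt Real.pi * ∫ t in Set.Ioi (0 : ℝ), Complex.exp (-(z + (t : ℝ)) ^ 2)

/-!
Since `sin((2p+1)πξ) = sin(πξ) ∑_{|k|≤p} cos(2πkξ)`, the grating kernel is the trigonometric
polynomial `∑_{|k|≤p} cos(2πkξ)` (also at the integers, where both sides equal `2p+1`). Each term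
is the real part of `exp(-Bξ² + 2πikξ)`, and completing the square,
`-Bξ² + 2πikξ = -π²k²/B - (√B ξ - iπk/√B)²`, followed by the substitution `t = √B ξ - √B x`,
turns its integral over `(x, ∞)` into `e^{-π²k²/B} / √B` times the integral defining
`erfc(√B x - iπk/√B)`.
-/

open Set

theorem card_Icc_neg_self (p : ℕ) : ((Finset.Icc (-(p : ℤ)) p).card : ℝ) = 2 * p + 1 := by
  rw [Int.card_Icc]
  have : ((p : ℤ) + 1 - -(p : ℤ)).toNat = 2 * p + 1 := by omega
  rw [this]; push_cast; ring

theorem setIntegral_Ioi_comp_add_right {E : Type*} [NormedAddCommGroup E] [NormedSpace ℝ E]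
    (g : ℝ → E) (a c : ℝ) : ∫ x in Ioi a, g (x + c) = ∫ x in Ioi (a + c), g x := by
  rw [← (measurePreserving_add_right volume c).setIntegral_preimage_emb
    (measurableEmbedding_addRight c) g, preimage_add_const_Ioi, add_sub_cancel_right]

theorem sin_mul_sum_cos_eq_sin (p : ℕ) (ξ : ℝ) :
    sin (π * ξ) * ∑ k ∈ Finset.Icc (-(p : ℤ)) p, cos (2 * π * k * ξ) =
      sin ((2 * p + 1) * π * ξ) := by
  induction p with
  | zero => simp
  | succ p ih =>
    have hIcc : Finset.Icc (-((p + 1 : ℕ) : ℤ)) ((p + 1 : ℕ) : ℤ) =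
        insert (-(p + 1 : ℤ)) (insert ((p : ℤ) + 1) (Finset.Icc (-(p : ℤ)) p)) := by
      ext k; simp only [Finset.mem_Icc, Finset.mem_insert]; omega
    rw [hIcc, Finset.sum_insert (by simp only [Finset.mem_insert, Finset.mem_Icc]; omega),
      Finset.sum_insert (by simp only [Finset.mem_Icc]; omega)]
    push_cast at ih ⊢
    have h1 : 2 * π * -((p : ℝ) + 1) * ξ = -(2 * π * (p + 1) * ξ) := by ring
    have h2 : (2 * ((p : ℝ) + 1) + 1) * π * ξ = 2 * π * (p + 1) * ξ + π * ξ := by ring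
    have h3 : (2 * (p : ℝ) + 1) * π * ξ = 2 * π * (p + 1) * ξ - π * ξ := by ring
    rw [h1, cos_neg, h2, sin_add]
    rw [h3, sin_sub] at ih
    linear_combination ih

theorem graux_eq_sum_cos (p : ℕ) (ξ : ℝ) :
    graux p ξ = ∑ k ∈ Finset.Icc (-(p : ℤ)) p, cos (2 * π * k * ξ) := by
  rw [graux]
  split_ifs with h
  · obtain ⟨n, hn⟩ := sin_eq_zero_iff.mp h
    have hξ : ξ = n := mul_left_cancel₀ pi_ne_zero (by linarith)
    have hcos : ∀ k : ℤ, cos (2 * π * k * ξ) = 1 := fun k => by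
      rw [hξ, show 2 * π * k * n = ((k * n : ℤ) : ℝ) * (2 * π) by push_cast; ring]
      exact cos_int_mul_two_pi _
    simp only [hcos, Finset.sum_const, nsmul_eq_mul, mul_one, card_Icc_neg_self]
  · rw [← sin_mul_sum_cos_eq_sin, mul_div_cancel_left₀ _ h]

open Complex in
theorem integrable_cexp_neg_mul_sq_add_mul {B : ℝ} (hB : 0 < B) (c : ℝ) :
    Integrable fun ξ : ℝ => cexp (-B * ξ ^ 2 + 2 * π * I * c * ξ) := by
  convert GaussianFourier.integrable_cexp_neg_mul_sq_norm_add (V := ℝ) (b := B) (by simpa)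
    (2 * π * I * c) 1 using 3 with ξ
  simp [← ofReal_pow]

open Complex in
theorem cos_mul_exp_eq_re_cexp (B c ξ : ℝ) :
    Real.cos (2 * π * c * ξ) * rexp (-B * ξ ^ 2) = (cexp (-B * ξ ^ 2 + 2 * π * I * c * ξ)).re := by
  rw [show -B * ξ ^ 2 + 2 * π * I * c * ξ = ((-B * ξ ^ 2 : ℝ) : ℂ) + (2 * π * c * ξ : ℝ) * I by
    push_cast; ring, Complex.exp_add, ← ofReal_exp, re_ofReal_mul, exp_ofReal_mul_I_re, mul_comm]

open Complex in
theorem integral_Ioi_cexp_neg_sq_sub (a : ℝ) (w : ℂ) :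
    ∫ t in Ioi a, cexp (-((t : ℂ) - w) ^ 2) = (√π / 2 : ℝ) * cerfc (a - w) := by
  have hshift := setIntegral_Ioi_comp_add_right (fun t : ℝ => cexp (-((t : ℂ) - w) ^ 2)) 0 a
  rw [zero_add] at hshift
  have hπ : ((√π : ℝ) : ℂ) ≠ 0 := ofReal_ne_zero.mpr (sqrt_pos.mpr pi_pos).ne'
  have hintegrand : ∫ t in Ioi (0 : ℝ), cexp (-(((t + a : ℝ) : ℂ) - w) ^ 2) =
      ∫ t in Ioi (0 : ℝ), cexp (-((a : ℂ) - w + t) ^ 2) :=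
    setIntegral_congr_fun measurableSet_Ioi fun t _ => by push_cast; ring_nf
  rw [← hshift, hintegrand, cerfc]
  push_cast
  field_simp

open Complex in
theorem integral_Ioi_cexp_neg_mul_sq_add_mul {B : ℝ} (hB : 0 < B) (a c : ℝ) :
    ∫ ξ in Ioi a, cexp (-B * ξ ^ 2 + 2 * π * I * c * ξ) =
      (√π / (2 * √B) * rexp (-π ^ 2 * c ^ 2 / B) : ℝ) * cerfc (√B * a - I * π * c / √B) := by
  have hsB : 0 < √B := sqrt_pos.mpr hB
  set w : ℂ := I * π * c / √B
  have hsquare : ∀ ξ : ℝ, -(B : ℂ) * ξ ^ 2 + 2 * π * I * c * ξ =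
      (-π ^ 2 * c ^ 2 / B : ℝ) + -(((√B * ξ : ℝ) : ℂ) - w) ^ 2 := fun ξ => by
    have hB' : (B : ℂ) = (√B : ℂ) ^ 2 := by rw [← ofReal_pow, sq_sqrt hB.le]
    have : (√B : ℂ) ≠ 0 := ofReal_ne_zero.mpr hsB.ne'
    simp only [w]
    push_cast
    rw [hB']
    field_simp
    linear_combination ((π : ℂ) ^ 2 * c ^ 2) * I_sq
  simp_rw [hsquare, Complex.exp_add, integral_const_mul]
  rw [integral_comp_mul_left_Ioi (fun t : ℝ => cexp (-((t : ℂ) - w) ^ 2)) a hsB,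
    integral_Ioi_cexp_neg_sq_sub, real_smul, ← ofReal_exp]
  push_cast
  ring

open Complex in
theorem integral_Ioi_cos_mul_exp_neg_mul_sq {B : ℝ} (hB : 0 < B) (a c : ℝ) :
    ∫ ξ in Ioi a, Real.cos (2 * π * c * ξ) * rexp (-B * ξ ^ 2) =
      √π / (2 * √B) * rexp (-π ^ 2 * c ^ 2 / B) * (cerfc (√B * a - I * π * c / √B)).re := by
  simp_rw [cos_mul_exp_eq_re_cexp, ← RCLike.re_eq_complex_re]
  rw [integral_re (integrable_cexp_neg_mul_sq_add_mul hB c).integrableOn, RCLike.re_eq_complex_re,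
    integral_Ioi_cexp_neg_mul_sq_add_mul hB, re_ofReal_mul]

theorem grating_gaussian_integral_general (B : ℝ) (hB : 0 < B) (x : ℤ) (p : ℕ) :
    (∫ ξ in Set.Ioi ((x : ℝ)), graux p ξ * Real.exp (-B * ξ ^ 2)) =
      1 / 2 * Real.sqrt (Real.pi / B) *
        ∑ k ∈ Finset.Icc (-(p : ℤ)) (p : ℤ),
          Real.exp (-Real.pi ^ 2 * (k : ℝ) ^ 2 / B) *
            (cerfc ((Real.sqrt B * (x : ℝ) : ℝ) -
              Complex.I * Real.pi * (k : ℤ) / (Real.sqrt B : ℝ))).re := by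
  have hintegrable : ∀ k : ℤ, IntegrableOn
      (fun ξ : ℝ => Real.cos (2 * π * k * ξ) * rexp (-B * ξ ^ 2)) (Ioi (x : ℝ)) := fun k => by
    simp_rw [cos_mul_exp_eq_re_cexp]
    exact (integrable_cexp_neg_mul_sq_add_mul hB k).re.integrableOn
  simp_rw [graux_eq_sum_cos, Finset.sum_mul]
  rw [integral_finsetSum _ fun k _ => hintegrable k, Finset.mul_sum]
  refine Finset.sum_congr rfl fun k _ => ?_
  rw [integral_Ioi_cos_mul_exp_neg_mul_sq hB, sqrt_div pi_pos.le]
  push_cast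
  ring

/-- `∫_x^∞ K_p(ξ) e^{-Bξ²} dξ
  = (1/2)√(π/B) ∑_{k=-p}^p e^{-π²k²/B} Re erfc(√B x − iπk/√B)`. -/
theorem grating_gaussian_integral (B : ℝ) (hB : 0 < B) (x : ℤ) (hx : 1 ≤ x) (p : ℕ) :
    (∫ ξ in Set.Ioi ((x : ℝ)), graux p ξ * Real.exp (-B * ξ ^ 2)) =
      1 / 2 * Real.sqrt (Real.pi / B) *
        ∑ k ∈ Finset.Icc (-(p : ℤ)) (p : ℤ),
          Real.exp (-Real.pi ^ 2 * (k : ℝ) ^ 2 / B) *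
            (cerfc ((Real.sqrt B * (x : ℝ) : ℝ) -
              Complex.I * Real.pi * (k : ℤ) / (Real.sqrt B : ℝ))).re :=
  grating_gaussian_integral_general B hB x p
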